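/- For every matching pair (x, y), LCIS→(x, y) = 1 + M, where M is the maximum of LCIS→(x', y') over all matching pairs (x', y') with x' < x, y' < y, and A[x'] < A[x], and M = 0 if no such matching pair exists. -/
import Mathlib


/-- `IsCIS A B i j ia jb` says that the index sequences `ia, jb` form a common
(strictly) increasing subsequence of `A[1..i]` and `B[1..j]`. -/
def IsCIS (A B : ℕ → ℤ) (i j : ℕ) {l : ℕ} (ia jb : Fin l → ℕ) : Prop :=
  StrictMono ia ∧ StrictMono jb ∧
  (∀ k, 1 ≤ ia k ∧ ia k ≤ i) ∧
  (∀ k, 1 ≤ jb k ∧ jb k ≤ j) ∧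
  (∀ k, A (ia k) = B (jb k)) ∧
  StrictMono fun k => A (ia k)

/-- `dpLCIS A B t i j` : maximal length of a common increasing subsequence of
`A[1..i]` and `B[1..j]` all of whose values are `≤ t` (0 if none exists). -/
noncomputable def dpLCIS (A B : ℕ → ℤ) (t : ℤ) (i j : ℕ) : ℕ :=
  sSup {l | ∃ ia jb : Fin l → ℕ, IsCIS A B i j ia jb ∧ ∀ k, A (ia k) ≤ t}

/-- `lcisTo A B x y` : maximal length of a common increasing subsequence of
`A[1..x]` and `B[1..y]` whose last indices are exactly `x` and `y`. -/
noncomputable def lcisTo (A B : ℕ → ℤ) (x y : ℕ) : ℕ :=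
  sSup {l | ∃ ia jb : Fin l → ℕ, IsCIS A B x y ia jb ∧
    ∃ k : Fin l, (∀ k', k' ≤ k) ∧ ia k = x ∧ jb k = y}

/-- `lcisLen A B i j` : maximal length of a common increasing subsequence of
`A[1..i]` and `B[1..j]`. -/
noncomputable def lcisLen (A B : ℕ → ℤ) (i j : ℕ) : ℕ :=
  sSup {l | ∃ ia jb : Fin l → ℕ, IsCIS A B i j ia jb}

-- length bound
lemma IsCIS.len_le {A B : ℕ → ℤ} {i j l : ℕ} {ia jb : Fin l → ℕ}
    (h : IsCIS A B i j ia jb) : l ≤ i := by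
  rcases l with _ | m
  · exact Nat.zero_le _
  have key : ∀ m' : ℕ, ∀ hm : m' < m + 1, m' + 1 ≤ ia ⟨m', hm⟩ := by
    intro m' ; induction m' with
    | zero => intro hm; exact (h.2.2.1 _).1
    | succ p ih =>
      intro hm
      have h1 := ih (Nat.lt_of_succ_lt hm)
      have h2 : ia ⟨p, Nat.lt_of_succ_lt hm⟩ < ia ⟨p+1, hm⟩ :=
        h.1 (by simp [Fin.lt_def])
      omega
  have := key m (Nat.lt_succ_self m)
  have := (h.2.2.1 ⟨m, Nat.lt_succ_self m⟩).2
  omega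

lemma one_mem_tset {A B : ℕ → ℤ} {x y : ℕ} (hx1 : 1 ≤ x) (hy1 : 1 ≤ y)
    (hm : A x = B y) :
    1 ∈ {l | ∃ ia jb : Fin l → ℕ, IsCIS A B x y ia jb ∧
      ∃ k : Fin l, (∀ k', k' ≤ k) ∧ ia k = x ∧ jb k = y} := by
  refine ⟨fun _ => x, fun _ => y, ⟨Subsingleton.strictMono _, Subsingleton.strictMono _,
    fun _ => ⟨hx1, le_refl _⟩, fun _ => ⟨hy1, le_refl _⟩, fun _ => hm,
    Subsingleton.strictMono _⟩, ⟨0, fun k' => by omega, rfl, rfl⟩⟩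

lemma tset_bdd {A B : ℕ → ℤ} {x y : ℕ} :
    BddAbove {l | ∃ ia jb : Fin l → ℕ, IsCIS A B x y ia jb ∧
      ∃ k : Fin l, (∀ k', k' ≤ k) ∧ ia k = x ∧ jb k = y} := by
  refine ⟨x, fun l hl => ?_⟩
  obtain ⟨ia, jb, h, _⟩ := hl
  exact h.len_le

lemma lcisTo_le {A B : ℕ → ℤ} {x y : ℕ} (hx1 : 1 ≤ x) (hy1 : 1 ≤ y)
    (hm : A x = B y) : lcisTo A B x y ≤ x :=
  csSup_le ⟨1, one_mem_tset hx1 hy1 hm⟩ (fun l hl => by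
    obtain ⟨ia, jb, h, _⟩ := hl; exact h.len_le)

lemma one_le_lcisTo {A B : ℕ → ℤ} {x y : ℕ} (hx1 : 1 ≤ x) (hy1 : 1 ≤ y)
    (hm : A x = B y) : 1 ≤ lcisTo A B x y :=
  le_csSup tset_bdd (one_mem_tset hx1 hy1 hm)

lemma ext_mem {A B : ℕ → ℤ} {x y x' y' l : ℕ}
    (hxx : x' < x) (hyy : y' < y) (hAA : A x' < A x) (hm : A x = B y)
    (hl : l ∈ {l | ∃ ia jb : Fin l → ℕ, IsCIS A B x' y' ia jb ∧
      ∃ k : Fin l, (∀ k', k' ≤ k) ∧ ia k = x' ∧ jb k = y'}) :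
    l + 1 ∈ {l | ∃ ia jb : Fin l → ℕ, IsCIS A B x y ia jb ∧
      ∃ k : Fin l, (∀ k', k' ≤ k) ∧ ia k = x ∧ jb k = y} := by
  obtain ⟨ia, jb, ⟨hia, hjb, hbi, hbj, hAB, hAm⟩, k0, hk0top, hk0x, hk0y⟩ := hl
  set ia' : Fin (l+1) → ℕ := fun i => if h : (i : ℕ) < l then ia ⟨i, h⟩ else x with hia'
  set jb' : Fin (l+1) → ℕ := fun i => if h : (i : ℕ) < l then jb ⟨i, h⟩ else y with hjb'
  have hvia : ∀ i : Fin l, ia i ≤ x' := fun i => hk0x ▸ hia.monotone (hk0top i)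
  have hvjb : ∀ i : Fin l, jb i ≤ y' := fun i => hk0y ▸ hjb.monotone (hk0top i)
  have hvA : ∀ i : Fin l, A (ia i) ≤ A x' := fun i => hk0x ▸ hAm.monotone (hk0top i)
  have smia : StrictMono ia' := by
    intro a b hab
    simp only [hia']
    rcases Nat.lt_or_ge (a : ℕ) l with ha | ha
    · rcases Nat.lt_or_ge (b : ℕ) l with hb | hb
      · rw [dif_pos ha, dif_pos hb]; exact hia (Fin.mk_lt_mk.mpr hab)
      · rw [dif_pos ha, dif_neg (by omega)]
        exact lt_of_le_of_lt (hvia _) hxx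
    · exfalso; have := b.isLt; have := Fin.lt_def.mp hab; omega
  have smjb : StrictMono jb' := by
    intro a b hab
    simp only [hjb']
    rcases Nat.lt_or_ge (a : ℕ) l with ha | ha
    · rcases Nat.lt_or_ge (b : ℕ) l with hb | hb
      · rw [dif_pos ha, dif_pos hb]; exact hjb (Fin.mk_lt_mk.mpr hab)
      · rw [dif_pos ha, dif_neg (by omega)]
        exact lt_of_le_of_lt (hvjb _) hyy
    · exfalso; have := b.isLt; have := Fin.lt_def.mp hab; omega
  have smA : StrictMono fun i => A (ia' i) := by
    intro a b hab
    simp only [hia']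
    rcases Nat.lt_or_ge (a : ℕ) l with ha | ha
    · rcases Nat.lt_or_ge (b : ℕ) l with hb | hb
      · rw [dif_pos ha, dif_pos hb]; exact hAm (Fin.mk_lt_mk.mpr hab)
      · rw [dif_pos ha, dif_neg (by omega)]
        exact lt_of_le_of_lt (hvA _) hAA
    · exfalso; have := b.isLt; have := Fin.lt_def.mp hab; omega
  refine ⟨ia', jb', ⟨smia, smjb, ?_, ?_, ?_, smA⟩,
    Fin.last l, fun k' => Fin.le_last _, ?_, ?_⟩
  · intro i; simp only [hia']; split_ifs with h
    · exact ⟨(hbi _).1, le_trans (le_trans (hbi _).2 (le_of_lt hxx)) (le_refl x)⟩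
    · omega
  · intro i; simp only [hjb']; split_ifs with h
    · exact ⟨(hbj _).1, le_trans (hbj _).2 (le_of_lt hyy)⟩
    · omega
  · intro i; simp only [hia', hjb']; split_ifs with h
    · exact hAB _
    · exact hm
  · simp [hia', Fin.last]
  · simp [hjb', Fin.last]

lemma restrict_mem {A B : ℕ → ℤ} {x y p : ℕ}
    (hl : p + 2 ∈ {l | ∃ ia jb : Fin l → ℕ, IsCIS A B x y ia jb ∧
      ∃ k : Fin l, (∀ k', k' ≤ k) ∧ ia k = x ∧ jb k = y}) :
    ∃ x' y', 1 ≤ x' ∧ x' < x ∧ 1 ≤ y' ∧ y' < y ∧ A x' = B y' ∧ A x' < A x ∧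
      p + 1 ∈ {l | ∃ ia jb : Fin l → ℕ, IsCIS A B x' y' ia jb ∧
        ∃ k : Fin l, (∀ k', k' ≤ k) ∧ ia k = x' ∧ jb k = y'} := by
  obtain ⟨ia, jb, ⟨hia, hjb, hbi, hbj, hAB, hAm⟩, k0, hk0top, hk0x, hk0y⟩ := hl
  have hk0 : k0 = Fin.last (p+1) := le_antisymm (Fin.le_last _) (hk0top _)
  subst hk0
  set x' := ia (Fin.castSucc (Fin.last p)) with hx'
  set y' := jb (Fin.castSucc (Fin.last p)) with hy'
  have hcs : Fin.castSucc (Fin.last p) < Fin.last (p+1) := Fin.castSucc_lt_last _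
  refine ⟨x', y', (hbi _).1, ?_, (hbj _).1, ?_, hAB _, ?_, ?_⟩
  · rw [← hk0x]; exact hia hcs
  · rw [← hk0y]; exact hjb hcs
  · rw [← hk0x]; exact hAm hcs
  · refine ⟨ia ∘ Fin.castSucc, jb ∘ Fin.castSucc,
      ⟨hia.comp Fin.strictMono_castSucc, hjb.comp Fin.strictMono_castSucc,
       fun k => ⟨(hbi _).1, hia.monotone (Fin.castSucc_le_castSucc_iff.mpr (Fin.le_last _))⟩,
       fun k => ⟨(hbj _).1, hjb.monotone (Fin.castSucc_le_castSucc_iff.mpr (Fin.le_last _))⟩,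
       fun k => hAB _, hAm.comp Fin.strictMono_castSucc⟩,
      Fin.last p, fun k' => Fin.le_last _, rfl, rfl⟩

theorem lcisTo_eq_one_add_max (n : ℕ) (A B : ℕ → ℤ) (x y : ℕ)
    (hx1 : 1 ≤ x) (hxn : x ≤ n) (hy1 : 1 ≤ y) (hyn : y ≤ n)
    (hmatch : A x = B y) :
    lcisTo A B x y =
      1 + sSup {m | ∃ x' y', 1 ≤ x' ∧ x' < x ∧ 1 ≤ y' ∧ y' < y ∧
        A x' = B y' ∧ A x' < A x ∧ m = lcisTo A B x' y'} := by
  set S := {m | ∃ x' y', 1 ≤ x' ∧ x' < x ∧ 1 ≤ y' ∧ y' < y ∧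
      A x' = B y' ∧ A x' < A x ∧ m = lcisTo A B x' y'} with hS
  have hSbdd : BddAbove S := by
    refine ⟨x, fun m hm => ?_⟩
    obtain ⟨x', y', hx'1, hx'x, hy'1, hy'y, hab, _, hmeq⟩ := hm
    exact hmeq ▸ le_trans (lcisTo_le hx'1 hy'1 hab) (le_of_lt hx'x)
  apply le_antisymm
  · have hmem : lcisTo A B x y ∈ {l | ∃ ia jb : Fin l → ℕ, IsCIS A B x y ia jb ∧
        ∃ k : Fin l, (∀ k', k' ≤ k) ∧ ia k = x ∧ jb k = y} :=
      Nat.sSup_mem ⟨1, one_mem_tset hx1 hy1 hmatch⟩ tset_bdd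
    rcases Nat.lt_or_ge (lcisTo A B x y) 2 with h | h
    · omega
    · obtain ⟨p, hp⟩ : ∃ p, lcisTo A B x y = p + 2 := ⟨lcisTo A B x y - 2, by omega⟩
      rw [hp] at hmem ⊢
      obtain ⟨x', y', hx'1, hx'x, hy'1, hy'y, hab, haa, hmem'⟩ := restrict_mem hmem
      have h1 : p + 1 ≤ lcisTo A B x' y' := le_csSup tset_bdd hmem'
      have h2 : lcisTo A B x' y' ≤ sSup S :=
        le_csSup hSbdd ⟨x', y', hx'1, hx'x, hy'1, hy'y, hab, haa, rfl⟩
      omega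
  · rcases S.eq_empty_or_nonempty with hSe | hSne
    · rw [hSe]
      simpa using one_le_lcisTo hx1 hy1 hmatch
    · obtain ⟨x', y', hx'1, hx'x, hy'1, hy'y, hab, haa, hMeq⟩ :=
        Nat.sSup_mem hSne hSbdd
      have hmem' : lcisTo A B x' y' ∈ {l | ∃ ia jb : Fin l → ℕ, IsCIS A B x' y' ia jb ∧
          ∃ k : Fin l, (∀ k', k' ≤ k) ∧ ia k = x' ∧ jb k = y'} :=
        Nat.sSup_mem ⟨1, one_mem_tset hx'1 hy'1 hab⟩ tset_bdd
      have h3 : lcisTo A B x' y' + 1 ≤ lcisTo A B x y :=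
        le_csSup tset_bdd (ext_mem hx'x hy'y haa hmatch hmem')
      rw [hMeq]
      omega
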